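/- Let z₁ = ((1-γ)/(4αγ))^{1/(1+γ)}, z₂ = -(1/(2α))·(4αγ/(1-γ))^{γ/(1+γ)} and k₁ = (4αγ/(1-γ))^{γ/(1+γ)}. Then z₁^{-γ} = k₁, -2αz₂ = k₁, and z₁^{1-γ}/(1-γ) + αz₂² = k₁(z₁ - z₂); that is, k₁ is the common slope of the tangent line joining the graph of y = -αx² at x = z₂ to the graph of y = x^{1-γ}/(1-γ) at x = z₁. -/

import Mathlib

open Real

/-- The threshold `k₁ = (4αγ/(1-γ))^{γ/(1+γ)}`. -/
noncomputable def k₁ (γ α : ℝ) : ℝ := (4 * α * γ / (1 - γ)) ^ (γ / (1 + γ))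

/-- The tangency point on the power-utility branch: `z₁ = ((1-γ)/(4αγ))^{1/(1+γ)}`. -/
noncomputable def z₁ (γ α : ℝ) : ℝ := ((1 - γ) / (4 * α * γ)) ^ (1 / (1 + γ))

/-- The tangency point on the quadratic branch:
`z₂ = -(1/(2α))·(4αγ/(1-γ))^{γ/(1+γ)}`. -/
noncomputable def z₂ (γ α : ℝ) : ℝ :=
  -(1 / (2 * α)) * (4 * α * γ / (1 - γ)) ^ (γ / (1 + γ))

theorem stmt3 (γ α : ℝ) (hγ0 : 0 < γ) (hγ1 : γ < 1) (hα : 0 < α) :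
    z₁ γ α ^ (-γ) = k₁ γ α ∧
    -2 * α * z₂ γ α = k₁ γ α ∧
    z₁ γ α ^ (1 - γ) / (1 - γ) + α * z₂ γ α ^ 2 = k₁ γ α * (z₁ γ α - z₂ γ α) := by
  have hγ' : (0:ℝ) < 1 - γ := by linarith
  have h1γ : (0:ℝ) < 1 + γ := by linarith
  set c : ℝ := 4 * α * γ / (1 - γ) with hc_def
  have hc : 0 < c := div_pos (by positivity) hγ'
  have hz1 : z₁ γ α = c ^ (-(1 / (1 + γ))) := by
    unfold z₁
    rw [show (1 - γ) / (4 * α * γ) = c⁻¹ by rw [hc_def, inv_div],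
      Real.inv_rpow hc.le, ← Real.rpow_neg hc.le]
  have hz2 : z₂ γ α = -(1 / (2 * α)) * k₁ γ α := rfl
  have part1 : z₁ γ α ^ (-γ) = k₁ γ α := by
    rw [hz1, ← Real.rpow_mul hc.le]
    unfold k₁
    rw [← hc_def]
    congr 1
    ring
  have hz1pow : z₁ γ α ^ (1 - γ) = c ^ ((γ - 1) / (1 + γ)) := by
    rw [hz1, ← Real.rpow_mul hc.le]
    congr 1
    ring
  have hk1z1 : k₁ γ α * z₁ γ α = c ^ ((γ - 1) / (1 + γ)) := by
    rw [hz1]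
    unfold k₁
    rw [← hc_def, ← Real.rpow_add hc]
    congr 1
    ring
  have hk1sq : k₁ γ α ^ 2 = c ^ ((γ - 1) / (1 + γ)) * c := by
    unfold k₁
    rw [← hc_def, ← Real.rpow_natCast (c ^ (γ / (1 + γ))) 2, ← Real.rpow_mul hc.le,
      ← Real.rpow_add_one hc.ne']
    congr 1
    push_cast
    field_simp
    ring
  refine ⟨part1, ?_, ?_⟩
  · rw [hz2]; field_simp
  · rw [hz1pow, hz2, mul_sub, hk1z1]
    have hcc : c * (1 - γ) = 4 * α * γ := by
      rw [hc_def]; field_simp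
    set A := c ^ ((γ - 1) / (1 + γ))
    set K := k₁ γ α
    field_simp
    linear_combination (γ-1) * hk1sq - A * hcc
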